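/- arXiv:1804.01362 — 2 statements merged into one kernel-verified Lean document; each statement's English description precedes it below -/
import Mathlib

section
/- Let J be a g-function and put m := max{J(qz) : q∈𝒜, z∈Ω}. Then m<1, and for every bounded Borel a:Ω→ℂ, every s>1, every k≥1 and every x∈Ω one has Σ_{w∈𝒜^k} |a(wx)| 𝕁(wx)^s ≤ ‖a‖_∞ · m^{(s−1)k}; consequently ζ₊(s) converges absolutely for every s>1. If moreover log J is α-Hölder and a:Ω→[0,∞) is continuous and not identically zero, then Σ_{k≥1} (L_{log J}^k a)(x) = +∞ for every x∈Ω; thus s=1 is the abscissa of convergence of ζ₊. -/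
open Real MeasureTheory Filter Topology Set

open scoped Classical

namespace GS

/-- The full shift space `Ω = 𝒜^ℕ`. -/
abbrev Omega (𝒜 : Type) : Type := ℕ → 𝒜

variable {𝒜 : Type}

/-- The left shift `σ(x₁,x₂,…) = (x₂,x₃,…)`. -/
def shift (x : Omega 𝒜) : Omega 𝒜 := fun n => x (n + 1)

/-- Prepending a symbol: `qx = (q,x₁,x₂,…)`. -/
def cons (q : 𝒜) (x : Omega 𝒜) : Omega 𝒜 := fun n => Nat.casesOn n q x

/-- Concatenation `wx` of a finite word `w ∈ 𝒜^k` with `x ∈ Ω`. -/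
def concat {k : ℕ} (w : Fin k → 𝒜) (x : Omega 𝒜) : Omega 𝒜 :=
  fun n => if h : n < k then w ⟨n, h⟩ else x (n - k)

/-- The metric `d(x,y) = 2^{-N(x,y)}`, `N(x,y) = inf{k ≥ 1 : x_k ≠ y_k}`
(sequences are indexed from `0` in Lean, whence the `+ 1`). -/
noncomputable def dOmega (x y : Omega 𝒜) : ℝ :=
  if x = y then 0 else (1 / 2 : ℝ) ^ (sInf {k : ℕ | x k ≠ y k} + 1)

/-- `a : Ω → E` is `α`-Hölder (w.r.t. `dOmega`):
`Hol_α(a) = sup_{x≠y} ‖a x - a y‖ / d(x,y)^α < ∞`. -/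
def IsHolderW (α : ℝ) {E : Type*} [NormedAddCommGroup E] (a : Omega 𝒜 → E) : Prop :=
  ∃ C : ℝ, ∀ x y : Omega 𝒜, ‖a x - a y‖ ≤ C * (dOmega x y) ^ α

/-- The Hölder constant `Hol_α(a) = sup_{x≠y} ‖a x - a y‖ / d(x,y)^α`. -/
noncomputable def HolConst (α : ℝ) {E : Type*} [NormedAddCommGroup E] (a : Omega 𝒜 → E) : ℝ :=
  sSup {r : ℝ | ∃ x y : Omega 𝒜, x ≠ y ∧ r = ‖a x - a y‖ / (dOmega x y) ^ α}

/-- `J` is a `g`-function: continuous, strictly positive, with `∑_{q∈𝒜} J(qx) = 1`. -/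
def IsGFunction [Fintype 𝒜] [TopologicalSpace 𝒜] (J : Omega 𝒜 → ℝ) : Prop :=
  Continuous J ∧ (∀ x, 0 < J x) ∧ ∀ x : Omega 𝒜, ∑ q : 𝒜, J (cons q x) = 1

/-- The Ruelle transfer operator `(L_f φ)(x) = ∑_{q∈𝒜} e^{f(qx)} φ(qx)`. -/
noncomputable def ruelle [Fintype 𝒜] {E : Type*} [AddCommMonoid E] [Module ℝ E]
    (f : Omega 𝒜 → ℝ) (φ : Omega 𝒜 → E) : Omega 𝒜 → E :=
  fun x => ∑ q : 𝒜, Real.exp (f (cons q x)) • φ (cons q x)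

/-- Birkhoff sum `S_k(f) = ∑_{j=0}^{k-1} f ∘ σ^j`. -/
def birkhoff (f : Omega 𝒜 → ℝ) (k : ℕ) (x : Omega 𝒜) : ℝ :=
  ∑ j ∈ Finset.range k, f (shift^[j] x)

/-- `𝕁(wx) = exp (S_k(log J)(wx))` for a word `w` of length `k`. -/
noncomputable def JBirk (J : Omega 𝒜 → ℝ) (k : ℕ) (w : Fin k → 𝒜) (x : Omega 𝒜) : ℝ :=
  Real.exp (birkhoff (fun z => Real.log (J z)) k (concat w x))

/-- `ζ₊(s) = ∑_{k≥1} ∑_{w∈𝒜^k} a(wx) 𝕁(wx)^s`. -/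
noncomputable def zetaPlus [Fintype 𝒜] (J : Omega 𝒜 → ℝ) (a : Omega 𝒜 → ℂ) (x : Omega 𝒜)
    (s : ℝ) : ℂ :=
  ∑' k : ℕ, ∑ w : Fin (k + 1) → 𝒜, a (concat w x) * (((JBirk J (k + 1) w x) ^ s : ℝ) : ℂ)

/-- `ζ₋(s) = ∑_{k≥1} ∑_{w∈𝒜^k} a(wy) 𝕁(wx)^s`. -/
noncomputable def zetaMinus [Fintype 𝒜] (J : Omega 𝒜 → ℝ) (a : Omega 𝒜 → ℂ) (x y : Omega 𝒜)
    (s : ℝ) : ℂ :=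
  ∑' k : ℕ, ∑ w : Fin (k + 1) → 𝒜, a (concat w y) * (((JBirk J (k + 1) w x) ^ s : ℝ) : ℂ)

/-- `L_{log J}^* μ = μ`, i.e. `μ` is a `g`-measure of `J`, tested against continuous functions. -/
def IsGMeasure [Fintype 𝒜] [TopologicalSpace 𝒜] [MeasurableSpace 𝒜]
    (J : Omega 𝒜 → ℝ) (μ : Measure (Omega 𝒜)) : Prop :=
  IsProbabilityMeasure μ ∧
    ∀ φ : Omega 𝒜 → ℂ, Continuous φ →
      ∫ x, ruelle (fun z => Real.log (J z)) φ x ∂μ = ∫ x, φ x ∂μ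

/-- The cylinder set determined by a finite word. -/
def cyl {k : ℕ} (w : Fin k → 𝒜) : Set (Omega 𝒜) := {x | ∀ i : Fin k, x (i : ℕ) = w i}

/-- Entropy of the partition into cylinders of length `n`. -/
noncomputable def blockEntropy [Fintype 𝒜] [MeasurableSpace 𝒜] (μ : Measure (Omega 𝒜))
    (n : ℕ) : ℝ :=
  ∑ w : Fin n → 𝒜, Real.negMulLog (μ (cyl w)).toReal

/-- Kolmogorov–Sinai entropy `h_μ(σ)` of a shift-invariant measure, computed through the
generating partition into cylinders: `h_μ(σ) = lim_n H_n/n = inf_{n≥1} H_n/n`. -/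
noncomputable def KSentropy [Fintype 𝒜] [MeasurableSpace 𝒜] (μ : Measure (Omega 𝒜)) : ℝ :=
  ⨅ n : ℕ, blockEntropy μ (n + 1) / (n + 1)

/-- Topological pressure `P(f) = sup {h_μ(σ) + ∫ f dμ}` over shift-invariant Borel
probability measures. -/
noncomputable def pressure [Fintype 𝒜] [MeasurableSpace 𝒜] (f : Omega 𝒜 → ℝ) : ℝ :=
  sSup {r : ℝ | ∃ μ : Measure (Omega 𝒜), IsProbabilityMeasure μ ∧
    Measure.map shift μ = μ ∧ r = KSentropy μ + ∫ x, f x ∂μ}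

/-- `μ` is an equilibrium state of `f`. -/
def IsEquilibrium [Fintype 𝒜] [MeasurableSpace 𝒜] (f : Omega 𝒜 → ℝ)
    (μ : Measure (Omega 𝒜)) : Prop :=
  IsProbabilityMeasure μ ∧ Measure.map shift μ = μ ∧
    KSentropy μ + ∫ x, f x ∂μ = pressure f

/-- The Walters class `W(Ω,σ)`:
`sup_{n≥1} sup_{w∈𝒜^n} |S_n(f)(wx) − S_n(f)(wy)| → 0` as `d(x,y) → 0`. -/
def WaltersClass [TopologicalSpace 𝒜] (f : Omega 𝒜 → ℝ) : Prop :=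
  Continuous f ∧ ∀ ε > (0:ℝ), ∃ δ > (0:ℝ), ∀ x y : Omega 𝒜, dOmega x y < δ →
    ∀ (n : ℕ) (w : Fin n → 𝒜),
      |birkhoff f n (concat w x) - birkhoff f n (concat w y)| ≤ ε

/-- The set `W*` of finite (nonempty) words over `𝒜`. -/
def Words (𝒜 : Type) : Type := Σ k : ℕ, Fin (k + 1) → 𝒜

end GS
namespace GS

/-- `m = max{J(qz) : q ∈ 𝒜, z ∈ Ω}`. -/
noncomputable def supJ {𝒜 : Type} (J : Omega 𝒜 → ℝ) : ℝ :=
  sSup (Set.range fun p : 𝒜 × Omega 𝒜 => J (cons p.1 p.2))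

/-!
Since `J` is normalised, `L = L_{log J}` fixes constants, so `∑_{w ∈ 𝒜^k} 𝕁(wx) = 1`, while
`𝕁(wx) ≤ m^k` as a product of `k` values of `J`. Splitting `𝕁^s = 𝕁^{s-1} 𝕁` gives the bound
`‖a‖_∞ m^{(s-1)k}`, which is geometric because `m < 1`: the maximum of `J` is attained on the
compact space `Ω`, and at the maximiser another symbol still carries positive weight.

At `s = 1` there is no decay: a continuous `a ≥ 0`, `a ≠ 0` exceeds some `c > 0` on a cylinder
of length `n`, whence `L^n a ≥ c (min J)^n > 0` everywhere; `L` is positive and fixes constants,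
so `L^k a` keeps this lower bound for all `k ≥ n` and the series diverges.
-/

section Words

variable {𝒜 : Type}

lemma shift_cons (q : 𝒜) (x : Omega 𝒜) : shift (cons q x) = x := rfl

lemma cons_zero_shift (y : Omega 𝒜) : cons (y 0) (shift y) = y := by
  funext n; cases n <;> rfl

lemma cons_surjective : Function.Surjective fun p : 𝒜 × Omega 𝒜 => cons p.1 p.2 :=
  fun y => ⟨(y 0, shift y), cons_zero_shift y⟩

lemma concat_fin_zero (w : Fin 0 → 𝒜) (x : Omega 𝒜) : concat w x = x := by
  funext n; simp [concat]

lemma concat_cons (q : 𝒜) {k : ℕ} (w : Fin k → 𝒜) (x : Omega 𝒜) :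
    concat (Fin.cons q w) x = cons q (concat w x) := by
  funext n
  cases n with
  | zero => simp [concat, cons]
  | succ m =>
    show concat (Fin.cons q w) x (m + 1) = concat w x m
    simp only [concat]
    by_cases h : m < k
    · rw [dif_pos h, dif_pos (Nat.succ_lt_succ h)]
      exact Fin.cons_succ (α := fun _ => 𝒜) q w ⟨m, h⟩
    · rw [dif_neg h, dif_neg (by omega)]
      congr 1
      omega

lemma concat_mem_cylinder (z : Omega 𝒜) (n : ℕ) (y : Omega 𝒜) :
    concat (fun i : Fin n => z i) y ∈ PiNat.cylinder z n := by
  intro i hi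
  simp [concat, hi]

lemma birkhoff_succ (f : Omega 𝒜 → ℝ) (k : ℕ) (y : Omega 𝒜) :
    birkhoff f (k + 1) y = f y + birkhoff f k (shift y) := by
  simp only [birkhoff, Finset.sum_range_succ', Function.iterate_succ_apply,
    Function.iterate_zero_apply]
  ring

lemma JBirk_eq_prod {J : Omega 𝒜 → ℝ} (hpos : ∀ z, 0 < J z) (k : ℕ) (w : Fin k → 𝒜)
    (x : Omega 𝒜) : JBirk J k w x = ∏ j ∈ Finset.range k, J (shift^[j] (concat w x)) := by
  simp only [JBirk, birkhoff, Real.exp_sum, Real.exp_log (hpos _)]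

lemma JBirk_le_pow {J : Omega 𝒜 → ℝ} (hpos : ∀ z, 0 < J z) {m : ℝ} (hm : ∀ z, J z ≤ m)
    (k : ℕ) (w : Fin k → 𝒜) (x : Omega 𝒜) : JBirk J k w x ≤ m ^ k := by
  rw [JBirk_eq_prod hpos]
  calc ∏ j ∈ Finset.range k, J (shift^[j] (concat w x)) ≤ ∏ _j ∈ Finset.range k, m :=
        Finset.prod_le_prod (fun _ _ => (hpos _).le) fun _ _ => hm _
    _ = m ^ k := by rw [Finset.prod_const, Finset.card_range]

lemma pow_le_JBirk {J : Omega 𝒜 → ℝ} (hpos : ∀ z, 0 < J z) {c : ℝ} (hc : 0 ≤ c)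
    (hJc : ∀ z, c ≤ J z) (k : ℕ) (w : Fin k → 𝒜) (x : Omega 𝒜) : c ^ k ≤ JBirk J k w x := by
  rw [JBirk_eq_prod hpos]
  calc c ^ k = ∏ _j ∈ Finset.range k, c := by rw [Finset.prod_const, Finset.card_range]
    _ ≤ _ := Finset.prod_le_prod (fun _ _ => hc) fun _ _ => hJc _

lemma supJ_eq_iSup (J : Omega 𝒜 → ℝ) : supJ J = ⨆ z, J z :=
  congrArg sSup (cons_surjective.range_comp J)

end Words

lemma exists_cylinder_subset {E : ℕ → Type*} [∀ n, TopologicalSpace (E n)]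
    {U : Set (∀ n, E n)} (hU : IsOpen U) {z : ∀ n, E n} (hz : z ∈ U) :
    ∃ n, PiNat.cylinder z n ⊆ U := by
  obtain ⟨I, u, hu, hsub⟩ := isOpen_pi_iff.mp hU z hz
  refine ⟨I.sup id + 1, fun y hy => hsub fun i hi => ?_⟩
  rw [hy i (Nat.lt_succ_of_le (Finset.le_sup (f := id) hi))]
  exact (hu i hi).2

section Ruelle

variable {𝒜 : Type} [Fintype 𝒜]

lemma sum_fun_fin_succ {M : Type*} [AddCommMonoid M] {k : ℕ}
    (g : (Fin (k + 1) → 𝒜) → M) :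
    ∑ w : Fin (k + 1) → 𝒜, g w = ∑ q : 𝒜, ∑ w : Fin k → 𝒜, g (Fin.cons q w) := by
  rw [← Equiv.sum_comp (Fin.consEquiv fun _ => 𝒜) g, Fintype.sum_prod_type]
  rfl

lemma ruelle_iterate_apply {E : Type*} [AddCommMonoid E] [Module ℝ E] (f : Omega 𝒜 → ℝ)
    (k : ℕ) (φ : Omega 𝒜 → E) (x : Omega 𝒜) :
    (ruelle f)^[k] φ x =
      ∑ w : Fin k → 𝒜, Real.exp (birkhoff f k (concat w x)) • φ (concat w x) := by
  induction k generalizing φ with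
  | zero => simp [birkhoff, concat_fin_zero]
  | succ k ih =>
    rw [Function.iterate_succ_apply, ih, sum_fun_fin_succ, Finset.sum_comm]
    refine Finset.sum_congr rfl fun w _ => ?_
    simp only [ruelle, Finset.smul_sum, concat_cons, birkhoff_succ, shift_cons, Real.exp_add,
      mul_smul, smul_comm (Real.exp (birkhoff f k _))]

lemma ruelle_log_iterate_apply (J : Omega 𝒜 → ℝ) (k : ℕ) (φ : Omega 𝒜 → ℝ) (x : Omega 𝒜) :
    (ruelle fun z => Real.log (J z))^[k] φ x = ∑ w : Fin k → 𝒜, JBirk J k w x * φ (concat w x) :=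
  ruelle_iterate_apply _ k φ x

variable [TopologicalSpace 𝒜] {J : Omega 𝒜 → ℝ}

lemma ruelle_log_const (hJ : IsGFunction J) (c : ℝ) :
    (ruelle fun z => Real.log (J z)) (fun _ => c) = fun _ => c := by
  funext x
  simp only [ruelle, Real.exp_log (hJ.2.1 _), smul_eq_mul, ← Finset.sum_mul, hJ.2.2, one_mul]

lemma sum_JBirk_eq_one (hJ : IsGFunction J) (k : ℕ) (x : Omega 𝒜) :
    ∑ w : Fin k → 𝒜, JBirk J k w x = 1 := by
  simpa using (ruelle_log_iterate_apply J k (fun _ => 1) x).symm.trans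
    (congrFun (Function.iterate_fixed (ruelle_log_const hJ 1) k) x)

lemma const_le_ruelle_log_iterate (hJ : IsGFunction J) {c : ℝ} {φ : Omega 𝒜 → ℝ}
    (hφ : ∀ y, c ≤ φ y) (k : ℕ) (x : Omega 𝒜) :
    c ≤ (ruelle fun z => Real.log (J z))^[k] φ x := by
  rw [ruelle_log_iterate_apply]
  calc c = ∑ w : Fin k → 𝒜, JBirk J k w x * c := by
        rw [← Finset.sum_mul, sum_JBirk_eq_one hJ, one_mul]
    _ ≤ _ := Finset.sum_le_sum fun w _ =>
      mul_le_mul_of_nonneg_left (hφ _) (Real.exp_pos _).le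

lemma le_supJ (hJ : Continuous J) (z : Omega 𝒜) : J z ≤ supJ J := by
  rw [supJ_eq_iSup]
  exact le_ciSup (isCompact_range hJ).bddAbove z

lemma supJ_lt_one (hcard : 2 ≤ Fintype.card 𝒜) (hJ : IsGFunction J) : supJ J < 1 := by
  have : Nonempty 𝒜 := Fintype.card_pos_iff.mp (by omega)
  rw [supJ_eq_iSup, iSup, ← Set.image_univ, isCompact_univ.sSup_lt_iff_of_continuous
    Set.univ_nonempty hJ.1.continuousOn]
  intro y _
  obtain ⟨q, hq⟩ := Fintype.exists_ne_of_one_lt_card (by omega) (y 0)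
  have hpair : J (cons (y 0) (shift y)) + J (cons q (shift y)) ≤ 1 :=
    hJ.2.2 (shift y) ▸ Finset.add_le_sum (f := fun p => J (cons p (shift y)))
      (fun _ _ => (hJ.2.1 _).le)
      (Finset.mem_univ _) (Finset.mem_univ _) hq.symm
  rw [cons_zero_shift] at hpair
  linarith [hJ.2.1 (cons q (shift y))]


lemma sum_norm_mul_JBirk_rpow_le {E : Type*} [SeminormedAddCommGroup E] (hJ : IsGFunction J)
    {a : Omega 𝒜 → E} (ha : BddAbove (Set.range fun z => ‖a z‖)) {s : ℝ} (hs : 1 ≤ s) (k : ℕ)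
    (x : Omega 𝒜) :
    ∑ w : Fin k → 𝒜, ‖a (concat w x)‖ * JBirk J k w x ^ s
      ≤ (⨆ z, ‖a z‖) * supJ J ^ ((s - 1) * k) := by
  set m := supJ J
  have hm : 0 ≤ m := (hJ.2.1 x).le.trans (le_supJ hJ.1 x)
  have hterm : ∀ w : Fin k → 𝒜, ‖a (concat w x)‖ * JBirk J k w x ^ s
      ≤ (⨆ z, ‖a z‖) * m ^ ((s - 1) * k) * JBirk J k w x := by
    intro w
    have ht : 0 < JBirk J k w x := Real.exp_pos _
    have hdecay : JBirk J k w x ^ (s - 1) ≤ m ^ ((s - 1) * k) := by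
      rw [mul_comm, Real.rpow_natCast_mul hm]
      exact Real.rpow_le_rpow ht.le (JBirk_le_pow hJ.2.1 (le_supJ hJ.1) k w x) (by linarith)
    calc ‖a (concat w x)‖ * JBirk J k w x ^ s
        = ‖a (concat w x)‖ * JBirk J k w x ^ (s - 1) * JBirk J k w x := by
          rw [mul_assoc, ← Real.rpow_add_one ht.ne', sub_add_cancel]
      _ ≤ _ := by
          have hnorm : ‖a (concat w x)‖ ≤ ⨆ z, ‖a z‖ := le_ciSup ha _
          gcongr
          exact (norm_nonneg _).trans hnorm
  calc ∑ w : Fin k → 𝒜, ‖a (concat w x)‖ * JBirk J k w x ^ s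
      ≤ ∑ w : Fin k → 𝒜, (⨆ z, ‖a z‖) * m ^ ((s - 1) * k) * JBirk J k w x :=
        Finset.sum_le_sum fun w _ => hterm w
    _ = (⨆ z, ‖a z‖) * m ^ ((s - 1) * k) := by
        rw [← Finset.mul_sum, sum_JBirk_eq_one hJ, mul_one]

lemma summable_sum_norm_mul_JBirk_rpow {E : Type*} [SeminormedAddCommGroup E]
    (hcard : 2 ≤ Fintype.card 𝒜) (hJ : IsGFunction J) {a : Omega 𝒜 → E}
    (ha : BddAbove (Set.range fun z => ‖a z‖)) {s : ℝ} (hs : 1 < s) (x : Omega 𝒜) :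
    Summable fun k : ℕ => ∑ w : Fin (k + 1) → 𝒜, ‖a (concat w x)‖ * JBirk J (k + 1) w x ^ s := by
  have hm : 0 ≤ supJ J := (hJ.2.1 x).le.trans (le_supJ hJ.1 x)
  set r := supJ J ^ (s - 1)
  have hr1 : r < 1 := Real.rpow_lt_one hm (supJ_lt_one hcard hJ) (by linarith)
  refine Summable.of_nonneg_of_le (fun k => Finset.sum_nonneg fun w _ =>
      mul_nonneg (norm_nonneg _) (Real.rpow_nonneg (Real.exp_pos _).le _)) (fun k => ?_)
    ((summable_geometric_of_lt_one (Real.rpow_nonneg hm _) hr1).mul_left ((⨆ z, ‖a z‖) * r))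
  calc _ ≤ (⨆ z, ‖a z‖) * supJ J ^ ((s - 1) * ↑(k + 1)) :=
        sum_norm_mul_JBirk_rpow_le hJ ha hs.le (k + 1) x
    _ = (⨆ z, ‖a z‖) * r * r ^ k := by rw [Real.rpow_mul_natCast hm, pow_succ']; ring

lemma exists_pos_le_ruelle_log_iterate (hJ : IsGFunction J) {a : Omega 𝒜 → ℝ}
    (ha : Continuous a) (ha0 : ∀ z, 0 ≤ a z) {z : Omega 𝒜} (hz : 0 < a z) :
    ∃ n : ℕ, ∃ c > 0, ∀ y, c ≤ (ruelle fun z => Real.log (J z))^[n] a y := by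
  obtain ⟨n, hn⟩ := exists_cylinder_subset (isOpen_Ioi.preimage ha)
    (show z ∈ a ⁻¹' Set.Ioi (a z / 2) by simp [hz])
  obtain ⟨p, -, hp⟩ := isCompact_univ.exists_isMinOn ⟨z, trivial⟩ hJ.1.continuousOn
  have hJp : ∀ y, J p ≤ J y := fun y => isMinOn_iff.mp hp y trivial
  refine ⟨n, a z / 2 * J p ^ n, by have := hJ.2.1 p; positivity, fun y => ?_⟩
  rw [ruelle_log_iterate_apply]
  set w₀ : Fin n → 𝒜 := fun i => z i
  calc a z / 2 * J p ^ n ≤ JBirk J n w₀ y * a (concat w₀ y) := by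
        rw [mul_comm]
        exact mul_le_mul (pow_le_JBirk hJ.2.1 (hJ.2.1 p).le hJp n w₀ y)
          (hn (concat_mem_cylinder z n y)).le (by positivity) (Real.exp_pos _).le
    _ ≤ _ := Finset.single_le_sum (f := fun w : Fin n → 𝒜 => JBirk J n w y * a (concat w y))
        (fun w _ => mul_nonneg (Real.exp_pos _).le (ha0 _)) (Finset.mem_univ w₀)

lemma not_summable_ruelle_log_iterate (hJ : IsGFunction J) {a : Omega 𝒜 → ℝ}
    (ha : Continuous a) (ha0 : ∀ z, 0 ≤ a z) (hne : ∃ z, a z ≠ 0) (x : Omega 𝒜) :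
    ¬ Summable fun k : ℕ => (ruelle fun z => Real.log (J z))^[k + 1] a x := by
  obtain ⟨z, hz⟩ := hne
  obtain ⟨n, c, hc, hn⟩ := exists_pos_le_ruelle_log_iterate hJ ha ha0 ((ha0 z).lt_of_ne' hz)
  have hlarge : ∀ k ≥ n, c ≤ (ruelle fun z => Real.log (J z))^[k + 1] a x := by
    intro k hk
    rw [show k + 1 = (k + 1 - n) + n by omega, Function.iterate_add_apply]
    exact const_le_ruelle_log_iterate hJ hn _ x
  intro hsum
  obtain ⟨k, hlt, hk⟩ :=
    ((hsum.tendsto_atTop_zero.eventually_lt_const hc).and (eventually_ge_atTop n)).exists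
  exact (hlarge k hk).not_gt hlt

end Ruelle

theorem statement6_general {𝒜 : Type} [Fintype 𝒜] [TopologicalSpace 𝒜]
    [MeasurableSpace 𝒜] (hcard : 2 ≤ Fintype.card 𝒜)
    (J : Omega 𝒜 → ℝ) (hJ : IsGFunction J) :
    supJ J < 1 ∧
    (∀ a : Omega 𝒜 → ℂ, Measurable a → (∃ M : ℝ, ∀ z, ‖a z‖ ≤ M) →
      ∀ s : ℝ, 1 < s → ∀ (k : ℕ) (x : Omega 𝒜),
        ∑ w : Fin (k + 1) → 𝒜, ‖a (concat w x)‖ * (JBirk J (k + 1) w x) ^ s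
          ≤ (⨆ z : Omega 𝒜, ‖a z‖) * supJ J ^ ((s - 1) * ((k : ℝ) + 1))) ∧
    (∀ a : Omega 𝒜 → ℂ, Measurable a → (∃ M : ℝ, ∀ z, ‖a z‖ ≤ M) →
      ∀ s : ℝ, 1 < s → ∀ x : Omega 𝒜,
        Summable (fun k : ℕ =>
          ∑ w : Fin (k + 1) → 𝒜, ‖a (concat w x)‖ * (JBirk J (k + 1) w x) ^ s)) ∧
    (∀ α ∈ Set.Ioo (0 : ℝ) 1, IsHolderW α (fun z => Real.log (J z)) →
      ∀ a : Omega 𝒜 → ℝ, Continuous a → (∀ z, 0 ≤ a z) → (∃ z, a z ≠ 0) →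
        ∀ x : Omega 𝒜,
          ¬ Summable (fun k : ℕ => (ruelle (fun z => Real.log (J z)))^[k + 1] a x)) := by
  have bdd : ∀ a : Omega 𝒜 → ℂ, (∃ M : ℝ, ∀ z, ‖a z‖ ≤ M) →
      BddAbove (Set.range fun z => ‖a z‖) := by
    rintro a ⟨M, hM⟩
    exact ⟨M, Set.forall_mem_range.mpr hM⟩
  refine ⟨supJ_lt_one hcard hJ, ?_, ?_, ?_⟩
  · intro a _ ha s hs k x
    exact_mod_cast sum_norm_mul_JBirk_rpow_le hJ (bdd a ha) hs.le (k + 1) x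
  · intro a _ ha s hs x
    exact summable_sum_norm_mul_JBirk_rpow hcard hJ (bdd a ha) hs x
  · intro α _ _ a hac ha0 hne x
    exact not_summable_ruelle_log_iterate hJ hac ha0 hne x

/-- abscissa of convergence of `ζ₊`.
For a `g`-function `J`, `m := max J < 1`; for bounded Borel `a`, `s > 1`, `k ≥ 1`:
`∑_{w ∈ 𝒜^k} |a(wx)| 𝕁(wx)^s ≤ ‖a‖_∞ m^{(s−1)k}`, so `ζ₊(s)` converges absolutely; and if
`log J` is `α`-Hölder and `a ≥ 0` is continuous, `a ≠ 0`, then `∑_{k≥1} (L_{log J}^k a)(x) = ∞`,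
so `s = 1` is the abscissa of convergence of `ζ₊`. -/
theorem statement6 {𝒜 : Type} [Fintype 𝒜] [TopologicalSpace 𝒜] [DiscreteTopology 𝒜]
    [MeasurableSpace 𝒜] [BorelSpace 𝒜] (hcard : 2 ≤ Fintype.card 𝒜)
    (J : Omega 𝒜 → ℝ) (hJ : IsGFunction J) :
    supJ J < 1 ∧
    (∀ a : Omega 𝒜 → ℂ, Measurable a → (∃ M : ℝ, ∀ z, ‖a z‖ ≤ M) →
      ∀ s : ℝ, 1 < s → ∀ (k : ℕ) (x : Omega 𝒜),
        ∑ w : Fin (k + 1) → 𝒜, ‖a (concat w x)‖ * (JBirk J (k + 1) w x) ^ s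
          ≤ (⨆ z : Omega 𝒜, ‖a z‖) * supJ J ^ ((s - 1) * ((k : ℝ) + 1))) ∧
    (∀ a : Omega 𝒜 → ℂ, Measurable a → (∃ M : ℝ, ∀ z, ‖a z‖ ≤ M) →
      ∀ s : ℝ, 1 < s → ∀ x : Omega 𝒜,
        Summable (fun k : ℕ =>
          ∑ w : Fin (k + 1) → 𝒜, ‖a (concat w x)‖ * (JBirk J (k + 1) w x) ^ s)) ∧
    (∀ α ∈ Set.Ioo (0 : ℝ) 1, IsHolderW α (fun z => Real.log (J z)) →
      ∀ a : Omega 𝒜 → ℝ, Continuous a → (∀ z, 0 ≤ a z) → (∃ z, a z ≠ 0) →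
        ∀ x : Omega 𝒜,
          ¬ Summable (fun k : ℕ => (ruelle (fun z => Real.log (J z)))^[k + 1] a x)) :=
  statement6_general hcard J hJ

end GS
end

section
/- Let γ>2 and define f(s)=ζ(γs) ζ(γ)^{−s} for s>0. Then f is differentiable at s=1 with f(1)=1 and f′(1) = (γ ζ′(γ) − ζ(γ) log ζ(γ))/ζ(γ) < 0, and for the Hofbauer potential g on Ω={0,1}^ℕ with z∈C₀ one has lim_{s→1⁺} (s−1) Σ_{n≥1} (L_{sg}^n 1_{[1]})(z) = (ζ(γ) − 1)/(−f′(1)); equivalently, this limit equals (1/c)·ν([1]) where c := −f′(1)/ζ(γ) and ν([1]) = (ζ(γ)−1)/ζ(γ) is the mass that the eigenprobability ν of L_g^* gives to the cylinder [1]. -/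
open Real MeasureTheory Filter Topology Set

open scoped Classical

namespace GS

/-- The Riemann zeta function `ζ(γ) = ∑_{n≥1} n^{-γ}` (for real `γ > 1`). -/
noncomputable def zetaR (γ : ℝ) : ℝ := ∑' n : ℕ, ((n : ℝ) + 1) ^ (-γ)

/-- The Hofbauer potential on `Ω = {0,1}^ℕ`:
`g = −log ζ(γ)` on `C₀ = [0]`, `g = −γ log((k+1)/k)` on `C_k = [1⋯10]` (`k ≥ 1`), and
`g((1,1,1,…)) = 0`. -/
noncomputable def hof (γ : ℝ) (x : Omega (Fin 2)) : ℝ :=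
  if h : ∀ n, x n = 1 then 0
  else
    let k := Nat.find (not_forall.mp h)
    if k = 0 then -Real.log (zetaR γ) else -γ * Real.log (((k : ℝ) + 1) / (k : ℝ))

/-- The indicator function of the cylinder `[1] = {x : x₁ = 1}`. -/
noncomputable def indOne (x : Omega (Fin 2)) : ℝ := if x 0 = 1 then 1 else 0

/-- `L_s^n = (L_{s g}^n 1_{[1]})(z)` for the Hofbauer potential `g`. -/
noncomputable def LsHof (γ s : ℝ) (z : Omega (Fin 2)) (n : ℕ) : ℝ :=
  (ruelle (fun x => s * hof γ x))^[n] indOne z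

/-- `(L_{s g}^n 𝟏)(z)` for the Hofbauer potential `g`. -/
noncomputable def MsHof (γ s : ℝ) (z : Omega (Fin 2)) (n : ℕ) : ℝ :=
  (ruelle (fun x => s * hof γ x))^[n] (fun _ => (1 : ℝ)) z

/-- `f'(1)` for `f(s) = ζ(γs) ζ(γ)^{−s}`:
`f′(1) = (γ ζ′(γ) − ζ(γ) log ζ(γ))/ζ(γ)`. -/
noncomputable def fprime (γ : ℝ) : ℝ :=
  (γ * deriv zetaR γ - zetaR γ * Real.log (zetaR γ)) / zetaR γ

end GS
namespace GS

/-!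
On each `C_k` the function `L_{sg}^n 1_{[1]}` is constant. Sorting the preimage words of a point
of `C₀` by the number of `1`s prepended before the first `0` shows that its values `a_n` on `C₀`
solve the renewal equation
`a_{n+1} = ∑_{i+j=n} ζ(γ)^{-s} (i+1)^{-γs} a_j + (n+2)^{-γs}`. The kernel has total mass
`f(s) = ζ(γs) ζ(γ)^{-s}`, which is `< 1` for `s > 1`, so `∑ a_n = (ζ(γs) - 1)/(1 - f(s))`.
Since `f(1) = 1`, `(s - 1)/(1 - f(s)) → -1/f′(1)` as `s ↓ 1`, and `f′(1) < 0` because `ζ` is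
decreasing and `ζ(γ) > 1`.
-/

lemma summable_nat_add_one_rpow_neg {β : ℝ} (hβ : 1 < β) :
    Summable (fun n : ℕ => ((n : ℝ) + 1) ^ (-β)) := by
  simpa using (summable_nat_add_iff 1).mpr (Real.summable_nat_rpow.mpr (by linarith : -β < -1))

lemma summable_nat_add_one_rpow_neg_mul_log {β : ℝ} (hβ : 1 < β) :
    Summable (fun n : ℕ => ((n : ℝ) + 1) ^ (-β) * Real.log ((n : ℝ) + 1)) := by
  have hε : 0 < (β - 1) / 2 := by linarith
  refine Summable.of_nonneg_of_le
    (fun n => mul_nonneg (by positivity) (Real.log_nonneg (by simp))) (fun n => ?_)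
    ((summable_nat_add_one_rpow_neg (by linarith : 1 < (β + 1) / 2)).div_const ((β - 1) / 2))
  have hn : (0 : ℝ) < (n : ℝ) + 1 := by positivity
  calc ((n : ℝ) + 1) ^ (-β) * Real.log ((n : ℝ) + 1)
      ≤ ((n : ℝ) + 1) ^ (-β) * (((n : ℝ) + 1) ^ ((β - 1) / 2) / ((β - 1) / 2)) := by
        gcongr; exact Real.log_le_rpow_div hn.le hε
    _ = ((n : ℝ) + 1) ^ (-((β + 1) / 2)) / ((β - 1) / 2) := by
        rw [mul_div_assoc', ← Real.rpow_add hn]; ring_nf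

lemma hasDerivAt_zetaR {x : ℝ} (hx : 1 < x) :
    HasDerivAt zetaR (-∑' n : ℕ, ((n : ℝ) + 1) ^ (-x) * Real.log ((n : ℝ) + 1)) x := by
  obtain ⟨a, ha, hax⟩ := exists_between hx
  rw [← tsum_neg]
  refine hasDerivAt_tsum_of_isPreconnected (g := fun (n : ℕ) (y : ℝ) => ((n : ℝ) + 1) ^ (-y))
    (g' := fun n y => -(((n : ℝ) + 1) ^ (-y) * Real.log ((n : ℝ) + 1)))
    (summable_nat_add_one_rpow_neg_mul_log ha)
    isOpen_Ioi isPreconnected_Ioi (fun n y _ => ?_) (fun n y hy => ?_) (mem_Ioi.2 hax)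
    (summable_nat_add_one_rpow_neg hx) (mem_Ioi.2 hax)
  · have h := ((Real.hasStrictDerivAt_const_rpow (by positivity : (0 : ℝ) < n + 1)
      (-y)).hasDerivAt).comp y (hasDerivAt_neg y)
    rwa [mul_neg_one] at h
  · have hn : (1 : ℝ) ≤ (n : ℝ) + 1 := by simp
    rw [norm_neg, Real.norm_of_nonneg (mul_nonneg (by positivity) (Real.log_nonneg hn))]
    exact mul_le_mul_of_nonneg_right
      (Real.rpow_le_rpow_of_exponent_le hn (by linarith [mem_Ioi.1 hy])) (Real.log_nonneg hn)

lemma one_lt_zetaR {β : ℝ} (hβ : 1 < β) : 1 < zetaR β := by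
  have h := (summable_nat_add_one_rpow_neg hβ).sum_le_tsum (Finset.range 2)
    (fun n _ => by positivity)
  have h2 : (0 : ℝ) < ((1 : ℝ) + 1) ^ (-β) := by positivity
  simp only [Finset.sum_range_succ, Finset.sum_range_zero, Nat.cast_zero, Nat.cast_one, zero_add,
    Real.one_rpow] at h
  rw [zetaR]; linarith

lemma deriv_zetaR_neg {x : ℝ} (hx : 1 < x) : deriv zetaR x < 0 := by
  rw [(hasDerivAt_zetaR hx).deriv, neg_lt_zero]
  have h := (summable_nat_add_one_rpow_neg_mul_log hx).le_tsum 1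
    (fun n _ => mul_nonneg (by positivity) (Real.log_nonneg (by simp)))
  have h2 : (0 : ℝ) < ((1 : ℕ) + 1 : ℝ) ^ (-x) * Real.log ((1 : ℕ) + 1) :=
    mul_pos (by positivity) (Real.log_pos (by norm_num))
  linarith

lemma zetaR_le_zetaR {β β' : ℝ} (hβ : 1 < β) (h : β ≤ β') : zetaR β' ≤ zetaR β :=
  Summable.tsum_le_tsum (fun n => Real.rpow_le_rpow_of_exponent_le (by simp) (by linarith))
    (summable_nat_add_one_rpow_neg (hβ.trans_le h)) (summable_nat_add_one_rpow_neg hβ)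

lemma zetaR_pos {β : ℝ} (hβ : 1 < β) : 0 < zetaR β := one_pos.trans (one_lt_zetaR hβ)

lemma hasDerivAt_zetaR_mul_rpow_neg {γ : ℝ} (hγ : 1 < γ) :
    HasDerivAt (fun s : ℝ => zetaR (γ * s) * zetaR γ ^ (-s)) (fprime γ) 1 := by
  have hζ := zetaR_pos hγ
  have hζγ : HasDerivAt (fun s : ℝ => zetaR (γ * s)) (deriv zetaR γ * γ) 1 := by
    refine HasDerivAt.comp (h₂ := zetaR) 1 ?_ (by simpa using (hasDerivAt_id (1 : ℝ)).const_mul γ)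
    rw [mul_one]; exact (hasDerivAt_zetaR hγ).differentiableAt.hasDerivAt
  have hpow := ((Real.hasStrictDerivAt_const_rpow hζ (-1)).hasDerivAt).comp 1 (hasDerivAt_neg 1)
  refine (hζγ.mul hpow).congr_deriv ?_
  simp only [Function.comp_apply, mul_one, Real.rpow_neg_one, fprime]
  field_simp
  ring

lemma fprime_neg {γ : ℝ} (hγ : 1 < γ) : fprime γ < 0 := by
  have hζ := one_lt_zetaR hγ
  have hlog := Real.log_pos hζ
  have hD := deriv_zetaR_neg hγ
  exact div_neg_of_neg_of_pos (by nlinarith) (by linarith)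

lemma zetaR_mul_rpow_neg_lt_one {γ s : ℝ} (hγ : 1 < γ) (hs : 1 < s) :
    zetaR (γ * s) * zetaR γ ^ (-s) < 1 := by
  have hζ := one_lt_zetaR hγ
  calc zetaR (γ * s) * zetaR γ ^ (-s) ≤ zetaR γ * zetaR γ ^ (-s) := by
        gcongr; exact zetaR_le_zetaR hγ (by nlinarith)
    _ < zetaR γ * zetaR γ ^ (-(1 : ℝ)) := by
        gcongr
        exact Real.rpow_lt_rpow_of_exponent_lt hζ (by linarith)
    _ = 1 := by rw [Real.rpow_neg_one, mul_inv_cancel₀ (by positivity)]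

open Finset in
lemma sum_range_sum_antidiagonal_le {f g : ℕ → ℝ} (hf : 0 ≤ f) (hg : 0 ≤ g) (N : ℕ) :
    ∑ n ∈ range N, ∑ p ∈ antidiagonal n, f p.1 * g p.2
      ≤ (∑ i ∈ range N, f i) * ∑ j ∈ range N, g j := by
  have hdisj : ((range N : Finset ℕ) : Set ℕ).PairwiseDisjoint
      (antidiagonal : ℕ → Finset (ℕ × ℕ)) :=
    fun m _ n _ hmn => disjoint_left.2 fun p hm hn =>
      hmn ((HasAntidiagonal.mem_antidiagonal.1 hm).symm.trans
        (HasAntidiagonal.mem_antidiagonal.1 hn))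
  rw [sum_mul_sum, ← sum_product', ← sum_biUnion hdisj]
  refine sum_le_sum_of_subset_of_nonneg (fun p hp => ?_) fun p _ _ => mul_nonneg (hf _) (hg _)
  obtain ⟨n, hn, hp⟩ := mem_biUnion.1 hp
  rw [Finset.mem_range] at hn
  rw [HasAntidiagonal.mem_antidiagonal] at hp
  rw [mem_product, Finset.mem_range, Finset.mem_range]
  omega

open Finset in
theorem hasSum_of_renewal {a q b : ℕ → ℝ} {Q B : ℝ} (hq : HasSum q Q) (hb : HasSum b B)
    (hq0 : ∀ n, 0 ≤ q n) (hb0 : ∀ n, 0 ≤ b n) (hQ : Q < 1) (ha0 : a 0 = 0)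
    (ha : ∀ n, a (n + 1) = ∑ p ∈ antidiagonal n, q p.1 * a p.2 + b n) :
    HasSum a (B / (1 - Q)) := by
  have ha_nonneg : ∀ n, 0 ≤ a n := by
    intro n
    induction n using Nat.strong_induction_on with
    | _ n ih =>
      cases n with
      | zero => rw [ha0]
      | succ n =>
        rw [ha n]
        refine add_nonneg (sum_nonneg fun p hp => mul_nonneg (hq0 _) (ih _ ?_)) (hb0 n)
        have := HasAntidiagonal.mem_antidiagonal.1 hp
        omega
  have hQ0 : 0 ≤ Q := hq.nonneg hq0
  have hstep : ∀ N, ∑ n ∈ range (N + 1), a n ≤ Q * ∑ n ∈ range N, a n + B := by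
    intro N
    rw [sum_range_succ', ha0, add_zero]
    simp_rw [ha, sum_add_distrib]
    gcongr
    · calc _ ≤ (∑ i ∈ range N, q i) * ∑ j ∈ range N, a j :=
            sum_range_sum_antidiagonal_le hq0 ha_nonneg N
        _ ≤ Q * ∑ j ∈ range N, a j := by
            gcongr
            · exact sum_nonneg fun j _ => ha_nonneg j
            · exact sum_le_hasSum _ (fun i _ => hq0 i) hq
    · exact sum_le_hasSum _ (fun i _ => hb0 i) hb
  have hsum : Summable a := by
    refine summable_of_sum_range_le (c := B / (1 - Q)) ha_nonneg fun N => ?_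
    have h := hstep N
    rw [sum_range_succ] at h
    rw [le_div_iff₀ (by linarith)]
    nlinarith [ha_nonneg N]
  have hprod := hq.summable.mul_of_nonneg hsum hq0 ha_nonneg
  have hfix : ∑' n, a n = Q * ∑' n, a n + B := by
    conv_lhs => rw [hsum.tsum_eq_zero_add, ha0, zero_add]
    simp_rw [ha]
    rw [(summable_sum_mul_antidiagonal_of_summable_mul hprod).tsum_add hb.summable,
      ← hq.summable.tsum_mul_tsum_eq_tsum_sum_antidiagonal hsum hprod, hq.tsum_eq, hb.tsum_eq]
  convert hsum.hasSum
  rw [div_eq_iff (by linarith)]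
  linarith

/-- `x ∈ C_k`. -/
def MemC (k : ℕ) (x : Omega (Fin 2)) : Prop := (∀ i < k, x i = 1) ∧ x k = 0

lemma memC_zero {x : Omega (Fin 2)} (hx : x 0 = 0) : MemC 0 x :=
  ⟨fun _ h => absurd h (Nat.not_lt_zero _), hx⟩

lemma memC_cons_zero (x : Omega (Fin 2)) : MemC 0 (cons 0 x) := memC_zero rfl

lemma MemC.cons_one {k : ℕ} {x : Omega (Fin 2)} (h : MemC k x) : MemC (k + 1) (cons 1 x) := by
  refine ⟨fun i hi => ?_, h.2⟩
  cases i with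
  | zero => rfl
  | succ j => exact h.1 j (by omega)

lemma hof_of_memC {γ : ℝ} {k : ℕ} {x : Omega (Fin 2)} (h : MemC k x) :
    hof γ x = if k = 0 then -Real.log (zetaR γ)
      else -γ * Real.log (((k : ℝ) + 1) / (k : ℝ)) := by
  have hne : ¬ ∀ n, x n = 1 := fun hall => by simpa [h.2] using hall k
  have hfind : Nat.find (not_forall.mp hne) = k :=
    (Nat.find_eq_iff _).2 ⟨by simp [h.2], fun m hm => by simp [h.1 m hm]⟩
  rw [hof, dif_neg hne]
  simp only [hfind]

lemma exp_mul_hof_cons_zero {γ : ℝ} (hγ : 1 < γ) (s : ℝ) (x : Omega (Fin 2)) :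
    Real.exp (s * hof γ (cons 0 x)) = zetaR γ ^ (-s) := by
  rw [hof_of_memC (memC_cons_zero x), if_pos rfl, Real.rpow_def_of_pos (zetaR_pos hγ)]
  ring_nf

lemma exp_mul_hof_cons_one (γ s : ℝ) {k : ℕ} {x : Omega (Fin 2)} (h : MemC k x) :
    Real.exp (s * hof γ (cons 1 x)) = (((k : ℝ) + 1) / ((k : ℝ) + 2)) ^ (γ * s) := by
  rw [hof_of_memC h.cons_one, if_neg k.succ_ne_zero,
    Real.rpow_def_of_pos (by positivity), ← inv_div, Real.log_inv]
  push_cast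
  ring_nf

/-- The value of `L_{sg}^n 1_{[1]}` on `C_k`. -/
noncomputable def hofVal (γ s : ℝ) : ℕ → ℕ → ℝ
  | 0, k => if k = 0 then 0 else 1
  | n + 1, k => zetaR γ ^ (-s) * hofVal γ s n 0
      + (((k : ℝ) + 1) / ((k : ℝ) + 2)) ^ (γ * s) * hofVal γ s n (k + 1)

lemma iterate_ruelle_indOne_of_memC {γ : ℝ} (hγ : 1 < γ) (s : ℝ) (n : ℕ) {k : ℕ}
    {x : Omega (Fin 2)} (h : MemC k x) :
    (ruelle (fun y => s * hof γ y))^[n] indOne x = hofVal γ s n k := by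
  induction n generalizing k x with
  | zero =>
    rcases k.eq_zero_or_pos with rfl | hk
    · simp [hofVal, indOne, h.2]
    · simp [hofVal, indOne, h.1 0 hk, hk.ne']
  | succ n ih =>
    rw [Function.iterate_succ_apply', ruelle, Fin.sum_univ_two, ih (memC_cons_zero x),
      ih h.cons_one, smul_eq_mul, smul_eq_mul, exp_mul_hof_cons_zero hγ, exp_mul_hof_cons_one γ s h]
    rfl

/-- `e^{s S_j g(1^j x)}` for `x ∈ C_k`, the weight of the `j` ones prepended to `x`. -/
noncomputable def runWeight (γ s : ℝ) (k j : ℕ) : ℝ :=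
  (((k : ℝ) + 1) / ((k : ℝ) + j + 1)) ^ (γ * s)

lemma runWeight_zero (γ s : ℝ) (k : ℕ) : runWeight γ s k 0 = 1 := by
  simp [runWeight, div_self (by positivity : (k : ℝ) + 1 ≠ 0)]

lemma runWeight_succ (γ s : ℝ) (k j : ℕ) :
    runWeight γ s k (j + 1)
      = (((k : ℝ) + 1) / ((k : ℝ) + 2)) ^ (γ * s) * runWeight γ s (k + 1) j := by
  rw [runWeight, runWeight, ← Real.mul_rpow (by positivity) (by positivity)]
  congr 1
  push_cast
  field_simp
  ring

lemma runWeight_zero_left (γ s : ℝ) (j : ℕ) :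
    runWeight γ s 0 j = ((j : ℝ) + 1) ^ (-(γ * s)) := by
  rw [runWeight, Real.rpow_neg (by positivity), ← Real.inv_rpow (by positivity)]
  simp [add_comm]

open Finset in
lemma hofVal_succ (γ s : ℝ) (n k : ℕ) : hofVal γ s (n + 1) k =
    zetaR γ ^ (-s) * ∑ p ∈ antidiagonal n, runWeight γ s k p.1 * hofVal γ s p.2 0
      + runWeight γ s k (n + 1) := by
  induction n generalizing k with
  | zero => simp [hofVal, runWeight_succ, runWeight_zero]
  | succ n ih =>
    conv_lhs => rw [hofVal, ih (k + 1)]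
    rw [Nat.sum_antidiagonal_succ]
    simp only [runWeight_zero, runWeight_succ γ s k, one_mul, mul_assoc, ← mul_sum]
    ring

open Finset in
lemma hofVal_succ_zero (γ s : ℝ) (n : ℕ) : hofVal γ s (n + 1) 0 =
    ∑ p ∈ antidiagonal n, zetaR γ ^ (-s) * ((p.1 : ℝ) + 1) ^ (-(γ * s)) * hofVal γ s p.2 0
      + ((n : ℝ) + 2) ^ (-(γ * s)) := by
  rw [hofVal_succ, mul_sum]
  simp only [runWeight_zero_left, mul_assoc]
  push_cast
  ring_nf

lemma hasSum_hofVal_zero {γ s : ℝ} (hγ : 1 < γ) (hs : 1 < s) :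
    HasSum (fun n => hofVal γ s n 0)
      ((zetaR (γ * s) - 1) / (1 - zetaR (γ * s) * zetaR γ ^ (-s))) := by
  have hβ : 1 < γ * s := by nlinarith
  have hζ : HasSum (fun n : ℕ => ((n : ℝ) + 1) ^ (-(γ * s))) (zetaR (γ * s)) :=
    (summable_nat_add_one_rpow_neg hβ).hasSum
  have htail : HasSum (fun n : ℕ => ((n : ℝ) + 2) ^ (-(γ * s))) (zetaR (γ * s) - 1) := by
    have h := (hasSum_nat_add_iff' 1).mpr hζ
    rw [Finset.sum_range_one, Nat.cast_zero, zero_add, Real.one_rpow] at h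
    simpa only [Nat.cast_add, Nat.cast_one, add_assoc, one_add_one_eq_two] using h
  rw [mul_comm (zetaR _)]
  exact hasSum_of_renewal (hζ.mul_left _) htail
    (fun _ => mul_nonneg (Real.rpow_nonneg (zetaR_pos hγ).le _) (by positivity))
    (fun _ => by positivity)
    (by rw [mul_comm]; exact zetaR_mul_rpow_neg_lt_one hγ hs) (by simp [hofVal])
    (hofVal_succ_zero γ s)

lemma tendsto_sub_div_sub_of_hasDerivAt {f : ℝ → ℝ} {f' x : ℝ} (hf : HasDerivAt f f' x)
    (hf' : f' ≠ 0) :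
    Tendsto (fun s => (s - x) / (f x - f s)) (𝓝[≠] x) (𝓝 (-f')⁻¹) := by
  refine ((hasDerivAt_iff_tendsto_slope.mp hf).neg.inv₀ (neg_ne_zero.2 hf')).congr fun s => ?_
  rw [slope_def_field, ← neg_div, neg_sub, inv_div]

/-- For `γ > 2` and `f(s) = ζ(γs) ζ(γ)^{−s}`: `f(1) = 1`, `f` is differentiable at `s = 1` with
`f′(1) = (γ ζ′(γ) − ζ(γ) log ζ(γ))/ζ(γ) < 0`, and for the Hofbauer potential `g` with `z ∈ C₀`,
`lim_{s→1⁺} (s−1) ∑_{n≥1} (L_{sg}^n 1_{[1]})(z) = (ζ(γ) − 1)/(−f′(1))`; equivalently this limit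
equals `(1/c)·ν([1])` with `c := −f′(1)/ζ(γ)` and `ν([1]) = (ζ(γ)−1)/ζ(γ)`. -/
theorem statement11 (γ : ℝ) (hγ : 2 < γ) (z : Omega (Fin 2)) (hz : z 0 = 0) :
    zetaR (γ * 1) * zetaR γ ^ (-(1 : ℝ)) = 1 ∧
    HasDerivAt (fun s : ℝ => zetaR (γ * s) * zetaR γ ^ (-s)) (fprime γ) 1 ∧
    fprime γ < 0 ∧
    Tendsto (fun s : ℝ => (s - 1) * ∑' n : ℕ, LsHof γ s z (n + 1)) (𝓝[>] (1 : ℝ))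
      (𝓝 ((zetaR γ - 1) / (-fprime γ))) ∧
    (zetaR γ - 1) / (-fprime γ)
      = (1 / (-fprime γ / zetaR γ)) * ((zetaR γ - 1) / zetaR γ) := by
  have hγ1 : 1 < γ := by linarith
  have hζ := zetaR_pos hγ1
  have hf' := fprime_neg hγ1
  have hf1 : zetaR (γ * 1) * zetaR γ ^ (-(1 : ℝ)) = 1 := by
    rw [mul_one, Real.rpow_neg_one, mul_inv_cancel₀ hζ.ne']
  have hf := hasDerivAt_zetaR_mul_rpow_neg hγ1
  refine ⟨hf1, hf, hf', ?_, by field_simp⟩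
  have hsum : ∀ s ∈ Ioi (1 : ℝ), (zetaR (γ * s) - 1)
      * ((s - 1) / (1 - zetaR (γ * s) * zetaR γ ^ (-s)))
        = (s - 1) * ∑' n : ℕ, LsHof γ s z (n + 1) := fun s hs => by
    have h := (hasSum_nat_add_iff' 1).mpr (hasSum_hofVal_zero hγ1 hs)
    rw [Finset.sum_range_one, show hofVal γ s 0 0 = 0 from rfl, sub_zero] at h
    simp only [LsHof, iterate_ruelle_indOne_of_memC hγ1 s _ (memC_zero hz)]
    rw [h.tsum_eq]
    ring
  have hζγ : Tendsto (fun s : ℝ => zetaR (γ * s) - 1) (𝓝[>] 1) (𝓝 (zetaR γ - 1)) := by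
    have h : ContinuousAt (fun s : ℝ => zetaR (γ * s)) 1 :=
      (hasDerivAt_zetaR hγ1).continuousAt.comp_of_eq (continuous_const_mul γ).continuousAt
        (mul_one γ)
    have h := h.tendsto
    rw [mul_one] at h
    exact (h.mono_left nhdsWithin_le_nhds).sub_const 1
  have hslope := (tendsto_sub_div_sub_of_hasDerivAt hf hf'.ne).mono_left
    (nhdsWithin_mono _ fun s (hs : 1 < s) => hs.ne')
  rw [hf1] at hslope
  rw [div_eq_mul_inv]
  exact (hζγ.mul hslope).congr' (eventually_mem_nhdsWithin.mono hsum)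

end GS
end
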